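/- arXiv:1807.04402 — 2 statements merged into one kernel-verified Lean document; each statement's English description precedes it below -/
import Mathlib

section
/- Let I = [a,b] ⊂ ℝ with b − a ≤ 1 and ε ∈ [0,1]. There exists a universal constant C such that for any measurable functions v, g: I × ℝ → ℂ, the function e₁(t,x) = |v(t,x)+g(t,x)|^{4−ε}(v+g)(t,x) − |v(t,x)|^{4−ε}v(t,x) satisfies ‖e₁‖_{L^1_t L^2_x(I)} ≤ C ‖g‖_{L^∞_t L^2_x(I)}^{ε/4} ‖g‖_{L^5_t L^{10}_x(I)}^{1−ε/4} ( ‖v‖_{L^5_t L^{10}_x(I)}^{4−ε} + ‖g‖_{L^5_t L^{10}_x(I)}^{4−ε} ), whenever the right-hand side norms are finite. -/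
open MeasureTheory Set
open scoped ENNReal NNReal

/-- `𝒳₁(I) = L^∞_t L²_x(I)` norm. -/
noncomputable def XoneNorm (I : Set ℝ) (f : ℝ → ℝ → ℂ) : ℝ≥0∞ :=
  essSup (fun t => eLpNorm (f t) 2 volume) (volume.restrict I)

/-- `𝒳₂(I) = L^5_t L^{10}_x(I)` norm. -/
noncomputable def XtwoNorm (I : Set ℝ) (f : ℝ → ℝ → ℂ) : ℝ≥0∞ :=
  (∫⁻ t in I, (eLpNorm (f t) 10 volume) ^ (5:ℝ)) ^ ((5:ℝ)⁻¹)

/-- `L^1_t L^2_x(I)` norm. -/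
noncomputable def LoneLtwoNorm (I : Set ℝ) (f : ℝ → ℝ → ℂ) : ℝ≥0∞ :=
  ∫⁻ t in I, eLpNorm (f t) 2 volume

lemma aux_rpow_sub_rpow_le {B A p : ℝ} (hB : 0 ≤ B) (hBA : B ≤ A) (hp : 1 ≤ p) :
    A ^ p - B ^ p ≤ p * A ^ (p - 1) * (A - B) := by
  have hA : 0 ≤ A := hB.trans hBA
  have h := norm_image_sub_le_of_norm_deriv_le_segment' (f := fun x : ℝ => x ^ p)
    (f' := fun x => p * x ^ (p - 1)) (a := B) (b := A) (C := p * A ^ (p - 1))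
    (fun x _ => (Real.hasDerivAt_rpow_const (Or.inr hp)).hasDerivWithinAt)
    (fun x hx => ?_) A (right_mem_Icc.2 hBA)
  · calc A ^ p - B ^ p ≤ |A ^ p - B ^ p| := le_abs_self _
      _ ≤ p * A ^ (p - 1) * (A - B) := h
  · have hx0 : 0 ≤ x := hB.trans hx.1
    have hp0 : (0:ℝ) ≤ p := zero_le_one.trans hp
    rw [Real.norm_eq_abs, abs_mul, abs_of_nonneg hp0,
      abs_of_nonneg (Real.rpow_nonneg hx0 _)]
    exact mul_le_mul_of_nonneg_left
      (Real.rpow_le_rpow hx0 hx.2.le (sub_nonneg.2 hp)) hp0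

lemma aux_abs_rpow_sub_rpow {A B p : ℝ} (hA : 0 ≤ A) (hB : 0 ≤ B) (hp : 1 ≤ p) :
    |A ^ p - B ^ p| ≤ p * (A ⊔ B) ^ (p - 1) * |A - B| := by
  rcases le_total B A with h | h
  · rw [abs_of_nonneg (sub_nonneg.2 (Real.rpow_le_rpow hB h (zero_le_one.trans hp))),
      abs_of_nonneg (sub_nonneg.2 h), sup_eq_left.2 h]
    exact aux_rpow_sub_rpow_le hB h hp
  · rw [abs_sub_comm, abs_sub_comm A B,
      abs_of_nonneg (sub_nonneg.2 (Real.rpow_le_rpow hA h (zero_le_one.trans hp))),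
      abs_of_nonneg (sub_nonneg.2 h), sup_eq_right.2 h]
    exact aux_rpow_sub_rpow_le hA h hp

lemma aux_sup_rpow {A B p : ℝ} (hA : 0 ≤ A) (hB : 0 ≤ B) (hp : 0 ≤ p) :
    (A ⊔ B) ^ p ≤ A ^ p + B ^ p := by
  rcases le_total B A with h | h
  · rw [sup_eq_left.2 h]
    exact le_add_of_nonneg_right (Real.rpow_nonneg hB _)
  · rw [sup_eq_right.2 h]
    exact le_add_of_nonneg_left (Real.rpow_nonneg hA _)

lemma aux_ptwise {p : ℝ} (hp3 : 3 ≤ p) (hp4 : p ≤ 4) (z w : ℂ) :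
    ‖(↑(‖z‖ ^ p) : ℂ) * z - (↑(‖w‖ ^ p) : ℂ) * w‖
      ≤ 5 * (‖z - w‖ * (‖z‖ ^ p + ‖w‖ ^ p)) := by
  have hp1 : (1:ℝ) ≤ p := by linarith
  have hp0 : (0:ℝ) ≤ p := by linarith
  set A := ‖z‖ with hAdef
  set B := ‖w‖ with hBdef
  have hA : 0 ≤ A := norm_nonneg _
  have hB : 0 ≤ B := norm_nonneg _
  have key : (↑(A ^ p) : ℂ) * z - (↑(B ^ p) : ℂ) * w
      = (A ^ p) • (z - w) + (A ^ p - B ^ p) • w := by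
    simp only [Complex.real_smul, Complex.ofReal_sub]
    ring
  rw [key]
  have h1 : ‖(A ^ p) • (z - w)‖ ≤ (A ^ p + B ^ p) * ‖z - w‖ := by
    rw [norm_smul, Real.norm_eq_abs, abs_of_nonneg (Real.rpow_nonneg hA _)]
    have : A ^ p ≤ A ^ p + B ^ p := le_add_of_nonneg_right (Real.rpow_nonneg hB _)
    exact mul_le_mul_of_nonneg_right this (norm_nonneg _)
  have h2 : ‖(A ^ p - B ^ p) • w‖ ≤ p * ((A ^ p + B ^ p) * ‖z - w‖) := by
    rw [norm_smul, Real.norm_eq_abs]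
    have hABp : |A ^ p - B ^ p| ≤ p * (A ⊔ B) ^ (p - 1) * |A - B| :=
      aux_abs_rpow_sub_rpow hA hB hp1
    have hAB : |A - B| ≤ ‖z - w‖ := abs_norm_sub_norm_le _ _
    calc |A ^ p - B ^ p| * ‖w‖
        ≤ (p * (A ⊔ B) ^ (p - 1) * ‖z - w‖) * B := by
          refine mul_le_mul ?_ le_rfl hB ?_
          · exact le_trans hABp (by
              refine mul_le_mul_of_nonneg_left hAB ?_
              positivity)
          · positivity
      _ ≤ p * ((A ^ p + B ^ p) * ‖z - w‖) := by
          have hs : (A ⊔ B) ^ (p - 1) * B ≤ A ^ p + B ^ p := by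
            have h1 : (A ⊔ B) ^ (p - 1) * B ≤ (A ⊔ B) ^ (p - 1) * (A ⊔ B) :=
              mul_le_mul_of_nonneg_left (le_sup_right) (Real.rpow_nonneg (by positivity) _)
            have h2 : (A ⊔ B) ^ (p - 1) * (A ⊔ B) = (A ⊔ B) ^ p := by
              nth_rewrite 2 [← Real.rpow_one (A ⊔ B)]
              rw [← Real.rpow_add_of_nonneg (le_sup_of_le_left hA) (by linarith) zero_le_one]
              ring_nf
            have h3 : (A ⊔ B) ^ p ≤ A ^ p + B ^ p := aux_sup_rpow hA hB hp0
            linarith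
          calc p * (A ⊔ B) ^ (p - 1) * ‖z - w‖ * B
              = p * ((A ⊔ B) ^ (p - 1) * B * ‖z - w‖) := by ring
            _ ≤ p * ((A ^ p + B ^ p) * ‖z - w‖) := by
                refine mul_le_mul_of_nonneg_left ?_ hp0
                exact mul_le_mul_of_nonneg_right hs (norm_nonneg _)
  calc ‖(A ^ p) • (z - w) + (A ^ p - B ^ p) • w‖
      ≤ ‖(A ^ p) • (z - w)‖ + ‖(A ^ p - B ^ p) • w‖ := norm_add_le _ _
    _ ≤ (A ^ p + B ^ p) * ‖z - w‖ + p * ((A ^ p + B ^ p) * ‖z - w‖) := add_le_add h1 h2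
    _ ≤ 5 * (‖z - w‖ * (A ^ p + B ^ p)) := by
        have h3 : (0:ℝ) ≤ ‖z - w‖ := norm_nonneg _
        have h4 : (0:ℝ) ≤ A ^ p := Real.rpow_nonneg hA p
        have h5 : (0:ℝ) ≤ B ^ p := Real.rpow_nonneg hB p
        nlinarith [mul_nonneg (mul_nonneg (add_nonneg h4 h5) h3) (show (0:ℝ) ≤ 4 - p by linarith)]

lemma aux_ptwise2 {p : ℝ} (hp3 : 3 ≤ p) (hp4 : p ≤ 4) (v g : ℂ) :
    ‖(↑(‖v + g‖ ^ p) : ℂ) * (v + g) - (↑(‖v‖ ^ p) : ℂ) * v‖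
      ≤ 85 * (‖g‖ * ‖v‖ ^ p + ‖g‖ * ‖g‖ ^ p) := by
  have hp0 : (0:ℝ) ≤ p := by linarith
  have h0 := aux_ptwise hp3 hp4 (v + g) v
  rw [add_sub_cancel_left] at h0
  have hbig : ‖v + g‖ ^ p ≤ 16 * (‖v‖ ^ p + ‖g‖ ^ p) := by
    have h1 : ‖v + g‖ ^ p ≤ (2 * (‖v‖ ⊔ ‖g‖)) ^ p := by
      refine Real.rpow_le_rpow (norm_nonneg _) ((norm_add_le _ _).trans ?_) hp0
      rcases le_total ‖v‖ ‖g‖ with h | h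
      · rw [sup_eq_right.2 h]; linarith
      · rw [sup_eq_left.2 h]; linarith
    have h2 : (2 * (‖v‖ ⊔ ‖g‖)) ^ p = 2 ^ p * (‖v‖ ⊔ ‖g‖) ^ p :=
      Real.mul_rpow (by norm_num) (le_sup_of_le_left (norm_nonneg _))
    have h3 : (2:ℝ) ^ p ≤ 2 ^ (4:ℝ) := Real.rpow_le_rpow_of_exponent_le one_le_two hp4
    have h4 : (2:ℝ) ^ (4:ℝ) = 16 := by
      rw [show (4:ℝ) = ((4:ℕ):ℝ) by norm_num, Real.rpow_natCast]; norm_num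
    have h5 : (‖v‖ ⊔ ‖g‖) ^ p ≤ ‖v‖ ^ p + ‖g‖ ^ p :=
      aux_sup_rpow (norm_nonneg _) (norm_nonneg _) hp0
    have h6 : (0:ℝ) ≤ (‖v‖ ⊔ ‖g‖) ^ p := Real.rpow_nonneg (le_sup_of_le_left (norm_nonneg _)) _
    calc ‖v + g‖ ^ p ≤ 2 ^ p * (‖v‖ ⊔ ‖g‖) ^ p := by rw [← h2]; exact h1
      _ ≤ 16 * (‖v‖ ^ p + ‖g‖ ^ p) := by nlinarith
  have hg : (0:ℝ) ≤ ‖g‖ := norm_nonneg _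
  have hv : (0:ℝ) ≤ ‖v‖ ^ p := Real.rpow_nonneg (norm_nonneg _) _
  have hgp : (0:ℝ) ≤ ‖g‖ ^ p := Real.rpow_nonneg (norm_nonneg _) _
  calc _ ≤ 5 * (‖g‖ * (‖v + g‖ ^ p + ‖v‖ ^ p)) := h0
    _ ≤ 85 * (‖g‖ * ‖v‖ ^ p + ‖g‖ * ‖g‖ ^ p) := by nlinarith


lemma meas_norm_rpow {G : ℝ → ℂ} (hG : Measurable G) {c : ℝ} (hc : 0 ≤ c) :
    Measurable fun x => ‖G x‖ ^ c :=
  (Real.continuous_rpow_const hc).measurable.comp hG.norm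

lemma aux_holder3 {ε : ℝ} (hε0 : 0 ≤ ε) (hε1 : ε ≤ 1)
    {G W : ℝ → ℂ} (hG : Measurable G) (hW : Measurable W) :
    eLpNorm (fun x => ‖G x‖ * ‖W x‖ ^ ((4:ℝ) - ε)) 2 volume
      ≤ eLpNorm G 2 volume ^ (ε/4) * eLpNorm G 10 volume ^ (1 - ε/4)
          * eLpNorm W 10 volume ^ ((4:ℝ) - ε) := by
  have hp0 : (0:ℝ) < 4 - ε := by linarith
  have hθ : (0:ℝ) < 1 - ε/4 := by linarith
  -- ψ and its eLpNorm
  set ψ : ℝ → ℝ := fun x => ‖W x‖ ^ ((4:ℝ) - ε) with hψ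
  have hψmeas : Measurable ψ := meas_norm_rpow hW hp0.le
  have hψnorm : eLpNorm ψ (ENNReal.ofReal (10/(4 - ε))) volume
      = eLpNorm W 10 volume ^ ((4:ℝ) - ε) := by
    rw [hψ, eLpNorm_norm_rpow W hp0]
    congr 1
    rw [← ENNReal.ofReal_mul (by positivity)]
    rw [show (10:ℝ)/(4 - ε) * (4 - ε) = 10 by field_simp]
    simp
  set φ₂ : ℝ → ℝ := fun x => ‖G x‖ ^ (1 - ε/4) with hφ₂
  have hφ₂meas : Measurable φ₂ := meas_norm_rpow hG hθ.le
  have hφ₂norm : eLpNorm φ₂ (ENNReal.ofReal (40/(4 - ε))) volume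
      = eLpNorm G 10 volume ^ (1 - ε/4) := by
    rw [hφ₂, eLpNorm_norm_rpow G hθ]
    congr 1
    rw [← ENNReal.ofReal_mul (by positivity)]
    rw [show (40:ℝ)/(4 - ε) * (1 - ε/4) = 10 by field_simp; ring]
    simp
  -- Hölder for φ₂ • ψ
  have h23 : eLpNorm (φ₂ • ψ) (ENNReal.ofReal (8/(4 - ε))) volume
      ≤ eLpNorm G 10 volume ^ (1 - ε/4) * eLpNorm W 10 volume ^ ((4:ℝ) - ε) := by
    rw [← hφ₂norm, ← hψnorm]
    refine eLpNorm_smul_le_mul_eLpNorm hψmeas.aestronglyMeasurable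
      hφ₂meas.aestronglyMeasurable (hpqr := ⟨?_⟩)
    symm
    rw [← ENNReal.ofReal_inv_of_pos (by positivity),
      ← ENNReal.ofReal_inv_of_pos (by positivity), ← ENNReal.ofReal_inv_of_pos (by positivity),
      ← ENNReal.ofReal_add (by positivity) (by positivity)]
    congr 1
    field_simp
    ring
  rcases eq_or_lt_of_le hε0 with hε | hε
  · -- ε = 0
    subst hε
    have hgoalrw : eLpNorm G 2 volume ^ ((0:ℝ)/4) * eLpNorm G 10 volume ^ (1 - (0:ℝ)/4)
        * eLpNorm W 10 volume ^ ((4:ℝ) - 0)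
        = eLpNorm G 10 volume * eLpNorm W 10 volume ^ ((4:ℝ) - 0) := by
      norm_num
    rw [hgoalrw]
    calc eLpNorm (fun x => ‖G x‖ * ‖W x‖ ^ ((4:ℝ) - 0)) 2 volume
        = eLpNorm ((fun x => ‖G x‖) • ψ) 2 volume := by
          rfl
      _ ≤ eLpNorm (fun x => ‖G x‖) (ENNReal.ofReal 10) volume
            * eLpNorm ψ (ENNReal.ofReal (10/((4:ℝ) - 0))) volume := by
          refine eLpNorm_smul_le_mul_eLpNorm hψmeas.aestronglyMeasurable
            hG.norm.aestronglyMeasurable (hpqr := ⟨?_⟩)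
          symm
          rw [show (2 : ℝ≥0∞) = ENNReal.ofReal 2 by simp,
            ← ENNReal.ofReal_inv_of_pos (by positivity),
            ← ENNReal.ofReal_inv_of_pos (by positivity),
            ← ENNReal.ofReal_inv_of_pos (by positivity),
            ← ENNReal.ofReal_add (by positivity) (by positivity)]
          congr 1
          norm_num
      _ = eLpNorm G 10 volume * eLpNorm W 10 volume ^ ((4:ℝ) - 0) := by
          rw [hψnorm, show ENNReal.ofReal 10 = (10:ℝ≥0∞) by simp, eLpNorm_norm]
  · -- ε > 0
    set φ₁ : ℝ → ℝ := fun x => ‖G x‖ ^ (ε/4) with hφ₁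
    have hφ₁meas : Measurable φ₁ := meas_norm_rpow hG (by positivity)
    have hφ₁norm : eLpNorm φ₁ (ENNReal.ofReal (8/ε)) volume
        = eLpNorm G 2 volume ^ (ε/4) := by
      rw [hφ₁, eLpNorm_norm_rpow G (by positivity)]
      congr 1
      rw [← ENNReal.ofReal_mul (by positivity)]
      rw [show (8:ℝ)/ε * (ε/4) = 2 by field_simp; ring]
      simp
    calc eLpNorm (fun x => ‖G x‖ * ‖W x‖ ^ ((4:ℝ) - ε)) 2 volume
        = eLpNorm (φ₁ • (φ₂ • ψ)) 2 volume := by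
          congr 1; funext x
          simp only [Pi.smul_apply, Pi.mul_apply, smul_eq_mul, hφ₁, hφ₂, hψ, ← mul_assoc]
          rw [← Real.rpow_add' (norm_nonneg _) (by norm_num : ε/4 + (1 - ε/4) ≠ 0)]
          rw [show ε/4 + (1 - ε/4) = 1 by ring, Real.rpow_one]
      _ ≤ eLpNorm φ₁ (ENNReal.ofReal (8/ε)) volume
            * eLpNorm (φ₂ • ψ) (ENNReal.ofReal (8/(4 - ε))) volume := by
          refine eLpNorm_smul_le_mul_eLpNorm
            ((hφ₂meas.smul hψmeas).aestronglyMeasurable)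
            hφ₁meas.aestronglyMeasurable (hpqr := ⟨?_⟩)
          symm
          rw [show (2 : ℝ≥0∞) = ENNReal.ofReal 2 by simp,
            ← ENNReal.ofReal_inv_of_pos (by positivity),
            ← ENNReal.ofReal_inv_of_pos (by positivity),
            ← ENNReal.ofReal_inv_of_pos (by positivity),
            ← ENNReal.ofReal_add (by positivity) (by positivity)]
          congr 1
          field_simp
          ring
      _ ≤ eLpNorm G 2 volume ^ (ε/4)
            * (eLpNorm G 10 volume ^ (1 - ε/4) * eLpNorm W 10 volume ^ ((4:ℝ) - ε)) := by
          rw [← hφ₁norm]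
          exact mul_le_mul_right h23 _
      _ = _ := by ring

lemma aux_spatial {ε : ℝ} (hε0 : 0 ≤ ε) (hε1 : ε ≤ 1)
    {V G : ℝ → ℂ} (hV : Measurable V) (hG : Measurable G) :
    eLpNorm (fun x => (↑(‖V x + G x‖ ^ ((4:ℝ) - ε)) : ℂ) * (V x + G x)
        - (↑(‖V x‖ ^ ((4:ℝ) - ε)) : ℂ) * V x) 2 volume
      ≤ ENNReal.ofReal 85 * (eLpNorm G 2 volume ^ (ε/4) * eLpNorm G 10 volume ^ (1 - ε/4)
          * (eLpNorm V 10 volume ^ ((4:ℝ) - ε) + eLpNorm G 10 volume ^ ((4:ℝ) - ε))) := by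
  have hp3 : (3:ℝ) ≤ 4 - ε := by linarith
  have hp4 : (4:ℝ) - ε ≤ 4 := by linarith
  set h₁ : ℝ → ℝ := fun x => ‖G x‖ * ‖V x‖ ^ ((4:ℝ) - ε) with hh₁
  set h₂ : ℝ → ℝ := fun x => ‖G x‖ * ‖G x‖ ^ ((4:ℝ) - ε) with hh₂
  have hm₁ : Measurable h₁ := hG.norm.mul (meas_norm_rpow hV (by linarith))
  have hm₂ : Measurable h₂ := hG.norm.mul (meas_norm_rpow hG (by linarith))
  calc eLpNorm (fun x => (↑(‖V x + G x‖ ^ ((4:ℝ) - ε)) : ℂ) * (V x + G x)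
        - (↑(‖V x‖ ^ ((4:ℝ) - ε)) : ℂ) * V x) 2 volume
      ≤ eLpNorm ((85:ℝ) • (h₁ + h₂)) 2 volume := by
        refine eLpNorm_mono_real fun x => ?_
        simp only [Pi.smul_apply, Pi.add_apply, smul_eq_mul, hh₁, hh₂]
        exact aux_ptwise2 hp3 hp4 (V x) (G x)
    _ = (‖(85:ℝ)‖₊ : ℝ≥0∞) * eLpNorm (h₁ + h₂) 2 volume := eLpNorm_const_smul _ _ _ _
    _ ≤ (‖(85:ℝ)‖₊ : ℝ≥0∞) * (eLpNorm h₁ 2 volume + eLpNorm h₂ 2 volume) := by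
        exact mul_le_mul_right (eLpNorm_add_le hm₁.aestronglyMeasurable
          hm₂.aestronglyMeasurable (by norm_num)) _
    _ ≤ (‖(85:ℝ)‖₊ : ℝ≥0∞) * (eLpNorm G 2 volume ^ (ε/4) * eLpNorm G 10 volume ^ (1 - ε/4)
          * eLpNorm V 10 volume ^ ((4:ℝ) - ε)
        + eLpNorm G 2 volume ^ (ε/4) * eLpNorm G 10 volume ^ (1 - ε/4)
          * eLpNorm G 10 volume ^ ((4:ℝ) - ε)) := by
        exact mul_le_mul_right (add_le_add (aux_holder3 hε0 hε1 hG hV)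
          (aux_holder3 hε0 hε1 hG hG)) _
    _ = ENNReal.ofReal 85 * (eLpNorm G 2 volume ^ (ε/4) * eLpNorm G 10 volume ^ (1 - ε/4)
          * (eLpNorm V 10 volume ^ ((4:ℝ) - ε) + eLpNorm G 10 volume ^ ((4:ℝ) - ε))) := by
        simp [mul_add]

lemma meas_eLpNorm_slice {g : ℝ → ℝ → ℂ} (hg : Measurable (Function.uncurry g))
    {q : ℝ≥0∞} (hq0 : q ≠ 0) (hqtop : q ≠ ⊤) :
    Measurable fun t => eLpNorm (g t) q volume := by
  simp_rw [eLpNorm_eq_lintegral_rpow_enorm_toReal hq0 hqtop]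
  have h1 : Measurable fun t => ∫⁻ x, ‖g t x‖ₑ ^ q.toReal := by
    apply Measurable.lintegral_prod_right
    exact ENNReal.continuous_rpow_const.measurable.comp
      (hg.enorm)
  exact ENNReal.continuous_rpow_const.measurable.comp h1

lemma aux_low {I : Set ℝ} (hvol : volume I ≤ 1) {f : ℝ → ℝ≥0∞}
    (hf : AEMeasurable f (volume.restrict I)) {s : ℝ} (hs0 : 0 < s) (hs5 : s ≤ 5) :
    ∫⁻ t in I, f t ^ s ≤ (∫⁻ t in I, f t ^ (5:ℝ)) ^ (s/5) := by
  rcases eq_or_lt_of_le hs5 with h5 | h5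
  · subst h5
    rw [div_self (by norm_num : (5:ℝ) ≠ 0), ENNReal.rpow_one]
  · have h5s : (0:ℝ) < 5 - s := by linarith
    have hpq : Real.HolderConjugate (5/s) (5/(5 - s)) := by
      constructor
      · rw [inv_one, inv_div, inv_div, ← add_div,
          show s + (5 - s) = 5 by ring, div_self (by norm_num : (5:ℝ) ≠ 0)]
      · exact div_pos (by norm_num) hs0
      · exact div_pos (by norm_num) h5s
    have key := ENNReal.lintegral_mul_le_Lp_mul_Lq (volume.restrict I) hpq
      (f := fun t => f t ^ s) (g := fun _ => (1:ℝ≥0∞)) (hf.pow_const _) aemeasurable_const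
    simp only [Pi.mul_apply, mul_one, ENNReal.one_rpow, lintegral_one,
      Measure.restrict_apply_univ] at key
    refine key.trans ?_
    have h1 : (∫⁻ t in I, (f t ^ s) ^ ((5:ℝ)/s)) ^ (1/((5:ℝ)/s))
        = (∫⁻ t in I, f t ^ (5:ℝ)) ^ (s/5) := by
      congr 1
      · congr 1; funext t
        rw [← ENNReal.rpow_mul]
        congr 1
        field_simp
      · field_simp
    rw [h1]
    refine le_trans (mul_le_mul_right (ENNReal.rpow_le_one hvol (by positivity)) _) ?_
    rw [mul_one]

/-- Hölder estimate for the error term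
`e₁ = |v+g|^{4−ε}(v+g) − |v|^{4−ε}v` in `L^1_t L^2_x(I)`. -/
theorem stmt4 :
    ∃ C : ℝ, 0 < C ∧ ∀ (a b ε : ℝ) (v g : ℝ → ℝ → ℂ),
      a ≤ b → b - a ≤ 1 → 0 ≤ ε → ε ≤ 1 →
      Measurable (Function.uncurry v) → Measurable (Function.uncurry g) →
      XoneNorm (Icc a b) g ≠ ⊤ → XtwoNorm (Icc a b) g ≠ ⊤ → XtwoNorm (Icc a b) v ≠ ⊤ →
      LoneLtwoNorm (Icc a b)
        (fun t x => (↑(‖v t x + g t x‖ ^ ((4:ℝ) - ε)) : ℂ) * (v t x + g t x)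
          - (↑(‖v t x‖ ^ ((4:ℝ) - ε)) : ℂ) * v t x)
      ≤ ENNReal.ofReal C * XoneNorm (Icc a b) g ^ (ε / 4) *
          XtwoNorm (Icc a b) g ^ (1 - ε / 4) *
          (XtwoNorm (Icc a b) v ^ ((4:ℝ) - ε) + XtwoNorm (Icc a b) g ^ ((4:ℝ) - ε)) := by
  refine ⟨85, by norm_num, ?_⟩
  intro a b ε v g hab hba hε0 hε1 hv hg hX1 hX2g hX2v
  have hθ : (0:ℝ) < 1 - ε/4 := by linarith
  have hp0 : (0:ℝ) < 4 - ε := by linarith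
  have h1ε : (0:ℝ) < 1 + ε := by linarith
  set I := Icc a b with hI
  have hvol : volume I ≤ 1 := by
    rw [hI, Real.volume_Icc]; exact ENNReal.ofReal_le_one.2 hba
  set μ := volume.restrict I with hμ
  have Mg10 : Measurable fun t => eLpNorm (g t) 10 volume :=
    meas_eLpNorm_slice hg (by norm_num) (by norm_num)
  have Mv10 : Measurable fun t => eLpNorm (v t) 10 volume :=
    meas_eLpNorm_slice hv (by norm_num) (by norm_num)
  have hX1' : XoneNorm I g ^ (ε/4) ≠ ⊤ :=
    ENNReal.rpow_ne_top_of_nonneg (by positivity) hX1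
  set c : ℝ≥0∞ := ENNReal.ofReal 85 * XoneNorm I g ^ (ε/4) with hc
  have hcne : c ≠ ⊤ := ENNReal.mul_ne_top ENNReal.ofReal_ne_top hX1'
  -- a.e. spatial bound
  have hae : ∀ᵐ t ∂μ,
      eLpNorm (fun x => (↑(‖v t x + g t x‖ ^ ((4:ℝ) - ε)) : ℂ) * (v t x + g t x)
          - (↑(‖v t x‖ ^ ((4:ℝ) - ε)) : ℂ) * v t x) 2 volume
        ≤ c * (eLpNorm (g t) 10 volume ^ (1 - ε/4) *
            (eLpNorm (v t) 10 volume ^ ((4:ℝ) - ε)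
              + eLpNorm (g t) 10 volume ^ ((4:ℝ) - ε))) := by
    have hess : ∀ᵐ t ∂μ, eLpNorm (g t) 2 volume ≤ XoneNorm I g :=
      ENNReal.ae_le_essSup (μ := μ) (fun t => eLpNorm (g t) 2 volume)
    filter_upwards [hess] with t ht
    refine (aux_spatial hε0 hε1 hv.of_uncurry_left hg.of_uncurry_left).trans ?_
    rw [hc, mul_assoc, mul_assoc]
    refine mul_le_mul_right ?_ _
    exact mul_le_mul' (ENNReal.rpow_le_rpow ht (by positivity)) le_rfl
  -- conjugate exponents in time
  have hPQ : Real.HolderConjugate (5/(1+ε)) (5/(4-ε)) := by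
    constructor
    · rw [inv_one, inv_div, inv_div, ← add_div, show (1+ε)+(4-ε) = 5 by ring,
        div_self (by norm_num : (5:ℝ) ≠ 0)]
    · exact div_pos (by norm_num) h1ε
    · exact div_pos (by norm_num) hp0
  -- Term 1
  have hT1 : ∫⁻ t, eLpNorm (g t) 10 volume ^ (1 - ε/4)
        * eLpNorm (v t) 10 volume ^ ((4:ℝ) - ε) ∂μ
      ≤ XtwoNorm I g ^ (1 - ε/4) * XtwoNorm I v ^ ((4:ℝ) - ε) := by
    have key := ENNReal.lintegral_mul_le_Lp_mul_Lq μ hPQ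
      (f := fun t => eLpNorm (g t) 10 volume ^ (1 - ε/4))
      (g := fun t => eLpNorm (v t) 10 volume ^ ((4:ℝ) - ε))
      (ENNReal.continuous_rpow_const.measurable.comp Mg10).aemeasurable
      (ENNReal.continuous_rpow_const.measurable.comp Mv10).aemeasurable
    simp only [Pi.mul_apply] at key
    refine key.trans ?_
    have hs1 : (0:ℝ) < (1 - ε/4) * (5/(1+ε)) := by positivity
    have hs1' : (1 - ε/4) * (5/(1+ε)) ≤ 5 := by
      rw [mul_div_assoc', div_le_iff₀ h1ε]; nlinarith
    refine mul_le_mul ?_ ?_ zero_le zero_le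
    · -- g factor
      have e1 : ∀ t : ℝ, (eLpNorm (g t) 10 volume ^ (1 - ε/4)) ^ ((5:ℝ)/(1+ε))
          = eLpNorm (g t) 10 volume ^ ((1 - ε/4) * (5/(1+ε))) := fun t =>
        (ENNReal.rpow_mul _ _ _).symm
      simp_rw [e1]
      calc (∫⁻ t, eLpNorm (g t) 10 volume ^ ((1 - ε/4) * (5/(1+ε))) ∂μ) ^ (1/((5:ℝ)/(1+ε)))
          ≤ ((∫⁻ t, eLpNorm (g t) 10 volume ^ (5:ℝ) ∂μ)
              ^ (((1 - ε/4) * (5/(1+ε)))/5)) ^ (1/((5:ℝ)/(1+ε))) :=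
            ENNReal.rpow_le_rpow (aux_low hvol Mg10.aemeasurable hs1 hs1') (by positivity)
        _ = XtwoNorm I g ^ (1 - ε/4) := by
            rw [XtwoNorm, ← ENNReal.rpow_mul, ← ENNReal.rpow_mul]
            congr 1
            field_simp
    · -- v factor
      have e2 : ∀ t : ℝ, (eLpNorm (v t) 10 volume ^ ((4:ℝ) - ε)) ^ ((5:ℝ)/(4-ε))
          = eLpNorm (v t) 10 volume ^ (5:ℝ) := fun t => by
        rw [← ENNReal.rpow_mul]
        congr 1
        field_simp
      simp_rw [e2]
      rw [XtwoNorm, ← ENNReal.rpow_mul]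
      apply le_of_eq
      congr 1
      field_simp
  -- Term 2
  have hT2 : ∫⁻ t, eLpNorm (g t) 10 volume ^ (1 - ε/4)
        * eLpNorm (g t) 10 volume ^ ((4:ℝ) - ε) ∂μ
      ≤ XtwoNorm I g ^ (1 - ε/4) * XtwoNorm I g ^ ((4:ℝ) - ε) := by
    have e3 : ∀ t : ℝ, eLpNorm (g t) 10 volume ^ (1 - ε/4)
        * eLpNorm (g t) 10 volume ^ ((4:ℝ) - ε)
        = eLpNorm (g t) 10 volume ^ ((1 - ε/4) + ((4:ℝ) - ε)) := fun t =>
      (ENNReal.rpow_add_of_nonneg _ _ hθ.le hp0.le).symm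
    simp_rw [e3]
    have hs2 : (0:ℝ) < (1 - ε/4) + ((4:ℝ) - ε) := by linarith
    have hs2' : (1 - ε/4) + ((4:ℝ) - ε) ≤ 5 := by linarith
    refine (aux_low hvol Mg10.aemeasurable hs2 hs2').trans (le_of_eq ?_)
    rw [XtwoNorm, ← ENNReal.rpow_mul, ← ENNReal.rpow_mul,
      ← ENNReal.rpow_add_of_nonneg _ _ (by positivity : (0:ℝ) ≤ 5⁻¹ * (1 - ε/4))
        (by positivity : (0:ℝ) ≤ 5⁻¹ * (4 - ε))]
    congr 1
    ring
  -- assemble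
  calc LoneLtwoNorm I
        (fun t x => (↑(‖v t x + g t x‖ ^ ((4:ℝ) - ε)) : ℂ) * (v t x + g t x)
          - (↑(‖v t x‖ ^ ((4:ℝ) - ε)) : ℂ) * v t x)
      ≤ ∫⁻ t, c * (eLpNorm (g t) 10 volume ^ (1 - ε/4) *
            (eLpNorm (v t) 10 volume ^ ((4:ℝ) - ε)
              + eLpNorm (g t) 10 volume ^ ((4:ℝ) - ε))) ∂μ := lintegral_mono_ae hae
    _ = c * ∫⁻ t, eLpNorm (g t) 10 volume ^ (1 - ε/4) *
            (eLpNorm (v t) 10 volume ^ ((4:ℝ) - ε)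
              + eLpNorm (g t) 10 volume ^ ((4:ℝ) - ε)) ∂μ :=
        lintegral_const_mul' _ _ hcne
    _ = c * ((∫⁻ t, eLpNorm (g t) 10 volume ^ (1 - ε/4)
            * eLpNorm (v t) 10 volume ^ ((4:ℝ) - ε) ∂μ)
          + ∫⁻ t, eLpNorm (g t) 10 volume ^ (1 - ε/4)
            * eLpNorm (g t) 10 volume ^ ((4:ℝ) - ε) ∂μ) := by
        congr 1
        simp_rw [mul_add]
        have MM1 : Measurable fun t => eLpNorm (g t) 10 volume ^ (1 - ε/4)
            * eLpNorm (v t) 10 volume ^ ((4:ℝ) - ε) :=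
          (ENNReal.continuous_rpow_const.measurable.comp Mg10).mul
            (ENNReal.continuous_rpow_const.measurable.comp Mv10)
        rw [lintegral_add_left MM1]
    _ ≤ c * (XtwoNorm I g ^ (1 - ε/4) * XtwoNorm I v ^ ((4:ℝ) - ε)
          + XtwoNorm I g ^ (1 - ε/4) * XtwoNorm I g ^ ((4:ℝ) - ε)) :=
        mul_le_mul_right (add_le_add hT1 hT2) _
    _ = ENNReal.ofReal 85 * XoneNorm I g ^ (ε / 4) * XtwoNorm I g ^ (1 - ε / 4) *
          (XtwoNorm I v ^ ((4:ℝ) - ε) + XtwoNorm I g ^ ((4:ℝ) - ε)) := by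
        rw [hc]; ring
end

section
/- Let m > 0, A ≥ 0, ε ∈ (0,1), and let w be defined on an interval [a,b]. Set e(t) := (θ_m(A + ‖w‖_{𝒳₂(a,t)}^5) − θ_m(A)) |w(t)|^{4−ε} w(t), where ‖w‖_{𝒳₂(a,t)} := ‖w‖_{L^5_s L^{10}_x([a,t])}. Then there exists a universal constant C₀ such that for every r ∈ [a,b], ‖e‖_{L^1_t L^2_x([a,r])} ≤ (C₀/m) ‖w‖_{𝒳(a,r)}^{10−ε}, where ‖w‖_{𝒳(a,r)} = ‖w‖_{L^∞_t L^2_x([a,r])} + ‖w‖_{L^5_t L^{10}_x([a,r])}. -/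
open MeasureTheory Set
open scoped ENNReal NNReal

/-- Measurability of the inner lintegral. -/
lemma aux_meas_lint {w : ℝ → ℝ → ℂ} (hw : Measurable (Function.uncurry w)) (c : ℝ) :
    Measurable fun t : ℝ => ∫⁻ x, (‖w t x‖₊ : ℝ≥0∞) ^ c ∂(volume : Measure ℝ) := by
  apply Measurable.lintegral_prod_right
  exact (ENNReal.continuous_rpow_const.measurable).comp hw.nnnorm.coe_nnreal_ennreal

lemma aux_meas_eLp {w : ℝ → ℝ → ℂ} (hw : Measurable (Function.uncurry w)) {p : ℝ≥0∞}
    (hp0 : p ≠ 0) (hpt : p ≠ ⊤) :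
    Measurable fun t : ℝ => eLpNorm (w t) p (volume : Measure ℝ) := by
  have : (fun t : ℝ => eLpNorm (w t) p volume) =
      fun t => (∫⁻ x, (‖w t x‖₊ : ℝ≥0∞) ^ p.toReal ∂(volume : Measure ℝ)) ^ (1 / p.toReal) := by
    funext t
    exact eLpNorm_eq_lintegral_rpow_enorm_toReal hp0 hpt
  rw [this]
  exact ENNReal.continuous_rpow_const.measurable.comp (aux_meas_lint hw _)

/-- Interpolation: `‖f‖_{10-2ε}^{5-ε} ≤ ‖f‖_2^{ε/4} ‖f‖_10^{5-5ε/4}`. -/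
lemma aux_interp {f : ℝ → ℂ} (hf : AEMeasurable f (volume : Measure ℝ)) {ε : ℝ}
    (hε : 0 < ε) (hε1 : ε < 1) :
    eLpNorm f (ENNReal.ofReal (10 - 2*ε)) volume ^ ((5:ℝ) - ε) ≤
      eLpNorm f 2 volume ^ (ε/4) * eLpNorm f 10 volume ^ ((5:ℝ) - 5*ε/4) := by
  have hs : (0:ℝ) < 10 - 2*ε := by linarith
  have hεne : ε ≠ 0 := ne_of_gt hε
  have h4ε : (0:ℝ) < 4 - ε := by linarith
  have conj : Real.HolderConjugate (4/ε) (4/(4-ε)) := by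
    rw [Real.holderConjugate_iff]; constructor
    · rw [lt_div_iff₀ hε]; linarith
    · rw [inv_div, inv_div]; field_simp; ring
  have hFm : AEMeasurable (fun x => (‖f x‖₊ : ℝ≥0∞) ^ (ε/2)) volume :=
    ENNReal.continuous_rpow_const.measurable.comp_aemeasurable hf.nnnorm.coe_nnreal_ennreal
  have hGm : AEMeasurable (fun x => (‖f x‖₊ : ℝ≥0∞) ^ (10 - 5*ε/2)) volume :=
    ENNReal.continuous_rpow_const.measurable.comp_aemeasurable hf.nnnorm.coe_nnreal_ennreal
  have key : (∫⁻ x, (‖f x‖₊ : ℝ≥0∞) ^ (10 - 2*ε)) ≤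
      (∫⁻ x, (‖f x‖₊ : ℝ≥0∞) ^ (2:ℝ)) ^ (ε/4) *
      (∫⁻ x, (‖f x‖₊ : ℝ≥0∞) ^ (10:ℝ)) ^ ((4-ε)/4) := by
    have H := ENNReal.lintegral_mul_le_Lp_mul_Lq volume conj hFm hGm
    have e1 : ∀ x : ℝ, ((fun x => (‖f x‖₊ : ℝ≥0∞) ^ (ε/2)) *
        (fun x => (‖f x‖₊ : ℝ≥0∞) ^ (10 - 5*ε/2))) x = (‖f x‖₊ : ℝ≥0∞) ^ (10 - 2*ε) := by
      intro x
      simp only [Pi.mul_apply]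
      rw [← ENNReal.rpow_add_of_nonneg _ _ (by linarith) (by linarith)]
      congr 1
      ring
    rw [lintegral_congr e1] at H
    have e2 : ∀ x : ℝ, ((‖f x‖₊ : ℝ≥0∞) ^ (ε/2)) ^ (4/ε) = (‖f x‖₊ : ℝ≥0∞) ^ (2:ℝ) := by
      intro x
      rw [← ENNReal.rpow_mul]
      congr 1
      field_simp
      ring
    have e3 : ∀ x : ℝ, ((‖f x‖₊ : ℝ≥0∞) ^ (10 - 5*ε/2)) ^ (4/(4-ε)) =
        (‖f x‖₊ : ℝ≥0∞) ^ (10:ℝ) := by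
      intro x
      rw [← ENNReal.rpow_mul]
      congr 1
      field_simp
      ring
    simp only [e2, e3] at H
    have hp : 1 / (4/ε) = ε/4 := by field_simp
    have hq : 1 / (4/(4-ε)) = (4-ε)/4 := by field_simp
    rwa [hp, hq] at H
  have hL : eLpNorm f (ENNReal.ofReal (10 - 2*ε)) volume =
      (∫⁻ x, (‖f x‖₊ : ℝ≥0∞) ^ (10 - 2*ε)) ^ (1/(10 - 2*ε)) := by
    rw [eLpNorm_eq_lintegral_rpow_enorm_toReal (by simp [ENNReal.ofReal_eq_zero]; linarith)
      ENNReal.ofReal_ne_top, ENNReal.toReal_ofReal hs.le]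
    simp only [enorm_eq_nnnorm]
  have h2 : eLpNorm f 2 volume = (∫⁻ x, (‖f x‖₊ : ℝ≥0∞) ^ (2:ℝ)) ^ (1/(2:ℝ)) := by
    rw [eLpNorm_eq_lintegral_rpow_enorm_toReal (by norm_num) (by norm_num)]
    simp only [enorm_eq_nnnorm]
    norm_num
  have h10 : eLpNorm f 10 volume = (∫⁻ x, (‖f x‖₊ : ℝ≥0∞) ^ (10:ℝ)) ^ (1/(10:ℝ)) := by
    rw [eLpNorm_eq_lintegral_rpow_enorm_toReal (by norm_num) (by norm_num)]
    simp only [enorm_eq_nnnorm]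
    norm_num
  rw [hL, h2, h10, ← ENNReal.rpow_mul, ← ENNReal.rpow_mul, ← ENNReal.rpow_mul]
  have e4 : 1/(10 - 2*ε) * (5 - ε) = 1/2 := by
    rw [div_mul_eq_mul_div, one_mul, div_eq_div_iff (by linarith) (by norm_num)]
    ring
  have e5 : 1/(2:ℝ) * (ε/4) = (ε/4) * (1/2) := by ring
  have e6 : 1/(10:ℝ) * (5 - 5*ε/4) = ((4-ε)/4) * (1/2) := by ring
  rw [e4, e5, e6, ENNReal.rpow_mul, ENNReal.rpow_mul,
    ← ENNReal.mul_rpow_of_nonneg _ _ (by norm_num : (0:ℝ) ≤ 1/2)]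
  exact ENNReal.rpow_le_rpow key (by norm_num)

/-- Lipschitz bound for `θ` on `[0, ∞)`. -/
lemma aux_lip (θ : ℝ → ℝ) (hθsmooth : ContDiff ℝ (⊤ : ℕ∞) θ) (hθsupp : ∀ x, 2 ≤ x → θ x = 0) :
    ∃ L : ℝ, 0 ≤ L ∧ ∀ u v : ℝ, 0 ≤ u → 0 ≤ v → |θ u - θ v| ≤ L * |u - v| := by
  obtain ⟨C1, hC1⟩ := isCompact_Icc.exists_bound_of_continuousOn
    (hθsmooth.continuous_deriv (by simp)).continuousOn (s := Icc (0:ℝ) 2)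
  refine ⟨max C1 0, le_max_right _ _, fun u v hu hv => ?_⟩
  have bound : ∀ x ∈ Ici (0:ℝ), ‖deriv θ x‖ ≤ max C1 0 := by
    intro x hx
    rcases le_or_gt x 2 with h | h
    · exact le_trans (hC1 x ⟨hx, h⟩) (le_max_left _ _)
    · have hev : θ =ᶠ[nhds x] fun _ => (0:ℝ) := by
        filter_upwards [eventually_gt_nhds h] with y hy using hθsupp y hy.le
      rw [hev.deriv_eq, deriv_const]
      simp
  have := Convex.norm_image_sub_le_of_norm_deriv_le
    (fun x _ => (hθsmooth.differentiable (by simp)).differentiableAt)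
    bound (convex_Ici 0) (mem_Ici.2 hv) (mem_Ici.2 hu)
  simpa [Real.norm_eq_abs] using this

/-- bound for the cutoff error term
`e(t) = (θ_m(A + ‖w‖_{𝒳₂(a,t)}^5) − θ_m(A)) |w(t)|^{4−ε}w(t)`:
`‖e‖_{L^1_tL^2_x([a,r])} ≤ (C₀/m) ‖w‖_{𝒳(a,r)}^{10−ε}`. -/
theorem stmt13 (θ : ℝ → ℝ) (hθsmooth : ContDiff ℝ (⊤ : ℕ∞) θ) (hθnonneg : ∀ x, 0 ≤ θ x)
    (hθsupp : ∀ x, 2 ≤ x → θ x = 0) (hθone : ∀ x ∈ Icc (0:ℝ) 1, θ x = 1) :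
    ∃ C₀ : ℝ, 0 < C₀ ∧ ∀ (m A ε a b : ℝ) (w : ℝ → ℝ → ℂ),
      0 < m → 0 ≤ A → 0 < ε → ε < 1 → a ≤ b → b - a ≤ 1 →
      Measurable (Function.uncurry w) →
      XoneNorm (Icc a b) w ≠ ⊤ → XtwoNorm (Icc a b) w ≠ ⊤ →
      ∀ r ∈ Icc a b,
      LoneLtwoNorm (Icc a r) (fun t x =>
          (↑(θ ((A + ((XtwoNorm (Icc a t) w).toReal) ^ 5) / m) - θ (A / m)) : ℂ) *
            (↑(‖w t x‖ ^ ((4:ℝ) - ε)) : ℂ) * w t x)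
        ≤ ENNReal.ofReal ((C₀ / m) *
            ((XoneNorm (Icc a r) w).toReal + (XtwoNorm (Icc a r) w).toReal)
              ^ ((10:ℝ) - ε)) := by
  obtain ⟨L, hL0, hLip⟩ := aux_lip θ hθsmooth hθsupp
  refine ⟨L + 1, by linarith, ?_⟩
  intro m A ε a b w hm hA hε hε1 hab hba hw hX1b hX2b r hr
  obtain ⟨har, hrb⟩ := hr
  have hsub : Icc a r ⊆ Icc a b := Icc_subset_Icc le_rfl hrb
  have hres : volume.restrict (Icc a r) ≤ volume.restrict (Icc a b) :=
    Measure.restrict_mono hsub le_rfl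
  set X1 := XoneNorm (Icc a r) w with hX1def
  set X2 := XtwoNorm (Icc a r) w with hX2def
  have hX2m : ∀ s t : Set ℝ, s ⊆ t → XtwoNorm s w ≤ XtwoNorm t w := by
    intro s t hst
    refine ENNReal.rpow_le_rpow ?_ (by norm_num)
    exact lintegral_mono' (Measure.restrict_mono hst le_rfl) le_rfl
  have hX1 : X1 ≠ ⊤ :=
    ne_top_of_le_ne_top hX1b (essSup_mono_measure (Measure.absolutelyContinuous_of_le hres))
  have hX2 : X2 ≠ ⊤ := ne_top_of_le_ne_top hX2b (hX2m _ _ hsub)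
  set K := L * X2.toReal ^ 5 / m with hKdef
  have hK0 : 0 ≤ K := by
    apply div_nonneg _ hm.le
    positivity
  -- pointwise (in t) estimate
  have step1 : ∀ t ∈ Icc a r,
      eLpNorm (fun x =>
          (↑(θ ((A + ((XtwoNorm (Icc a t) w).toReal) ^ 5) / m) - θ (A / m)) : ℂ) *
            (↑(‖w t x‖ ^ ((4:ℝ) - ε)) : ℂ) * w t x) 2 volume
        ≤ ENNReal.ofReal K *
          (eLpNorm (w t) 2 volume ^ (ε/4) * eLpNorm (w t) 10 volume ^ ((5:ℝ) - 5*ε/4)) := by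
    intro t ht
    have hwt : AEMeasurable (w t) volume := (hw.comp measurable_prodMk_left).aemeasurable
    set Y := ((XtwoNorm (Icc a t) w).toReal) ^ 5 with hYdef
    have hY0 : 0 ≤ Y := by positivity
    have hYle : Y ≤ X2.toReal ^ 5 := by
      have h1 : XtwoNorm (Icc a t) w ≤ X2 := hX2m _ _ (Icc_subset_Icc le_rfl ht.2)
      exact pow_le_pow_left₀ ENNReal.toReal_nonneg (ENNReal.toReal_mono hX2 h1) 5
    have hsc : |θ ((A + Y) / m) - θ (A / m)| ≤ K := by
      have h := hLip ((A + Y) / m) (A / m) (by positivity) (by positivity)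
      have he : (A + Y) / m - A / m = Y / m := by ring
      rw [he] at h
      have : |Y / m| = Y / m := abs_of_nonneg (by positivity)
      rw [this] at h
      refine h.trans ?_
      rw [hKdef, mul_div_assoc]
      gcongr
    have hpt : ∀ x, ‖(↑(θ ((A + Y) / m) - θ (A / m)) : ℂ) *
        (↑(‖w t x‖ ^ ((4:ℝ) - ε)) : ℂ) * w t x‖ ≤
        K * ‖‖w t x‖ ^ ((5:ℝ) - ε)‖ := by
      intro x
      rw [norm_mul, norm_mul, Complex.norm_real, Complex.norm_real]
      rw [Real.norm_eq_abs, Real.norm_eq_abs, Real.norm_eq_abs]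
      have haw : (0:ℝ) ≤ ‖w t x‖ := norm_nonneg _
      have h1 : |‖w t x‖ ^ ((4:ℝ) - ε)| = ‖w t x‖ ^ ((4:ℝ) - ε) :=
        abs_of_nonneg (Real.rpow_nonneg haw _)
      have h2 : |‖w t x‖ ^ ((5:ℝ) - ε)| = ‖w t x‖ ^ ((5:ℝ) - ε) := by
        exact abs_of_nonneg (Real.rpow_nonneg haw _)
      rw [h1, h2]
      have h3 : ‖w t x‖ ^ ((4:ℝ) - ε) * ‖w t x‖ =
          ‖w t x‖ ^ ((5:ℝ) - ε) := by
        have : ((5:ℝ) - ε) = ((4:ℝ) - ε) + 1 := by ring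
        rw [this, Real.rpow_add_of_nonneg haw (by linarith) zero_le_one, Real.rpow_one]
      rw [mul_assoc, h3]
      exact mul_le_mul_of_nonneg_right hsc (Real.rpow_nonneg haw _)
    have hstep := eLpNorm_le_mul_eLpNorm_of_ae_le_mul (μ := (volume : Measure ℝ))
      (Filter.Eventually.of_forall hpt) (2 : ℝ≥0∞)
    have hrw : eLpNorm (fun x => ‖w t x‖ ^ ((5:ℝ) - ε)) 2 volume =
        eLpNorm (w t) (ENNReal.ofReal (10 - 2*ε)) volume ^ ((5:ℝ) - ε) := by
      rw [eLpNorm_norm_rpow (w t) (by linarith : (0:ℝ) < 5 - ε)]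
      congr 2
      rw [show (2:ℝ≥0∞) = ENNReal.ofReal 2 by simp, ← ENNReal.ofReal_mul (by norm_num)]
      congr 1
      ring
    rw [hrw] at hstep
    exact hstep.trans (mul_le_mul_right (aux_interp hwt hε hε1) _)
  -- measurability
  have meas2 : Measurable fun t => eLpNorm (w t) 2 volume :=
    aux_meas_eLp hw (by norm_num) (by norm_num)
  have meas10 : Measurable fun t => eLpNorm (w t) 10 volume :=
    aux_meas_eLp hw (by norm_num) (by norm_num)
  have hmeasI : MeasurableSet (Icc a r) := measurableSet_Icc
  -- chain 1
  have chain1 : LoneLtwoNorm (Icc a r) (fun t x =>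
        (↑(θ ((A + ((XtwoNorm (Icc a t) w).toReal) ^ 5) / m) - θ (A / m)) : ℂ) *
          (↑(‖w t x‖ ^ ((4:ℝ) - ε)) : ℂ) * w t x)
      ≤ ENNReal.ofReal K * ∫⁻ t in Icc a r,
          eLpNorm (w t) 2 volume ^ (ε/4) * eLpNorm (w t) 10 volume ^ ((5:ℝ) - 5*ε/4) := by
    rw [LoneLtwoNorm, ← lintegral_const_mul' _ _ ENNReal.ofReal_ne_top]
    refine lintegral_mono_ae ?_
    filter_upwards [ae_restrict_mem hmeasI] with t ht
    exact step1 t ht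
  -- chain 2: pull out X1
  have chain2 : (∫⁻ t in Icc a r,
        eLpNorm (w t) 2 volume ^ (ε/4) * eLpNorm (w t) 10 volume ^ ((5:ℝ) - 5*ε/4))
      ≤ X1 ^ (ε/4) * ∫⁻ t in Icc a r, eLpNorm (w t) 10 volume ^ ((5:ℝ) - 5*ε/4) := by
    rw [← lintegral_const_mul' _ _ (ENNReal.rpow_ne_top_of_nonneg (by positivity) hX1)]
    refine lintegral_mono_ae ?_
    filter_upwards [ENNReal.ae_le_essSup (fun t => eLpNorm (w t) 2 volume)] with t ht
    exact mul_le_mul_left (ENNReal.rpow_le_rpow ht (by positivity)) _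
  -- chain 3: Hölder in time
  have chain3 : (∫⁻ t in Icc a r, eLpNorm (w t) 10 volume ^ ((5:ℝ) - 5*ε/4))
      ≤ X2 ^ ((5:ℝ) - 5*ε/4) := by
    have h4ε : (0:ℝ) < 4 - ε := by linarith
    have conj' : Real.HolderConjugate (4/(4-ε)) (4/ε) := by
      rw [Real.holderConjugate_iff]; constructor
      · rw [lt_div_iff₀ h4ε]; linarith
      · rw [inv_div, inv_div]; field_simp; ring
    have hfm : AEMeasurable (fun t => eLpNorm (w t) 10 volume ^ ((5:ℝ) - 5*ε/4))
        (volume.restrict (Icc a r)) :=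
      (ENNReal.continuous_rpow_const.measurable.comp meas10).aemeasurable
    have H := ENNReal.lintegral_mul_le_Lp_mul_Lq (volume.restrict (Icc a r)) conj' hfm
      (aemeasurable_const (b := (1:ℝ≥0∞)))
    simp only [Pi.mul_apply, mul_one] at H
    have e2 : ∀ t : ℝ, (eLpNorm (w t) 10 volume ^ ((5:ℝ) - 5*ε/4)) ^ (4/(4-ε)) =
        eLpNorm (w t) 10 volume ^ (5:ℝ) := by
      intro t
      rw [← ENNReal.rpow_mul]
      congr 1
      field_simp
    simp only [e2, ENNReal.one_rpow] at H
    rw [lintegral_one, Measure.restrict_apply_univ] at H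
    have hμ : (volume (Icc a r)) ^ (1/(4/ε)) ≤ 1 := by
      have h1 : volume (Icc a r) ≤ 1 := by
        rw [Real.volume_Icc]
        exact ENNReal.ofReal_le_one.2 (by linarith)
      calc (volume (Icc a r)) ^ (1/(4/ε)) ≤ (1:ℝ≥0∞) ^ (1/(4/ε)) :=
            ENNReal.rpow_le_rpow h1 (by positivity)
        _ = 1 := ENNReal.one_rpow _
    refine H.trans ?_
    rw [hX2def, XtwoNorm, ← ENNReal.rpow_mul]
    have e3 : (5:ℝ)⁻¹ * ((5:ℝ) - 5*ε/4) = 1/(4/(4-ε)) := by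
      field_simp
    rw [e3]
    calc (∫⁻ t in Icc a r, eLpNorm (w t) 10 volume ^ (5:ℝ)) ^ (1/(4/(4-ε))) *
          (volume (Icc a r)) ^ (1/(4/ε))
        ≤ (∫⁻ t in Icc a r, eLpNorm (w t) 10 volume ^ (5:ℝ)) ^ (1/(4/(4-ε))) * 1 :=
          mul_le_mul_right hμ _
      _ = _ := mul_one _
  -- assemble
  set S := X1 + X2 with hSdef
  have hX1S : X1 ≤ S := le_self_add
  have hX2S : X2 ≤ S := le_add_self
  have total : LoneLtwoNorm (Icc a r) (fun t x =>
        (↑(θ ((A + ((XtwoNorm (Icc a t) w).toReal) ^ 5) / m) - θ (A / m)) : ℂ) *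
          (↑(‖w t x‖ ^ ((4:ℝ) - ε)) : ℂ) * w t x)
      ≤ ENNReal.ofReal (L/m) * (X2 ^ (5:ℝ) * (X1 ^ (ε/4) * X2 ^ ((5:ℝ) - 5*ε/4))) := by
    have hKsplit : ENNReal.ofReal K = ENNReal.ofReal (L/m) * X2 ^ (5:ℝ) := by
      rw [hKdef]
      have : L * X2.toReal ^ 5 / m = (L/m) * X2.toReal ^ (5:ℝ) := by
        rw [← Real.rpow_natCast X2.toReal 5]
        push_cast
        ring
      rw [this, ENNReal.ofReal_mul (div_nonneg hL0 hm.le),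
        ← ENNReal.ofReal_rpow_of_nonneg ENNReal.toReal_nonneg (by norm_num),
        ENNReal.ofReal_toReal hX2]
    calc LoneLtwoNorm (Icc a r) _
        ≤ ENNReal.ofReal K * ∫⁻ t in Icc a r,
            eLpNorm (w t) 2 volume ^ (ε/4) * eLpNorm (w t) 10 volume ^ ((5:ℝ) - 5*ε/4) :=
          chain1
      _ ≤ ENNReal.ofReal K * (X1 ^ (ε/4) * ∫⁻ t in Icc a r,
            eLpNorm (w t) 10 volume ^ ((5:ℝ) - 5*ε/4)) := mul_le_mul_right chain2 _
      _ ≤ ENNReal.ofReal K * (X1 ^ (ε/4) * X2 ^ ((5:ℝ) - 5*ε/4)) :=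
          mul_le_mul_right (mul_le_mul_right chain3 _) _
      _ = ENNReal.ofReal (L/m) * (X2 ^ (5:ℝ) * (X1 ^ (ε/4) * X2 ^ ((5:ℝ) - 5*ε/4))) := by
          rw [hKsplit, mul_assoc]
  refine total.trans ?_
  have hSbound : X2 ^ (5:ℝ) * (X1 ^ (ε/4) * X2 ^ ((5:ℝ) - 5*ε/4)) ≤ S ^ ((10:ℝ) - ε) := by
    have b1 : X2 ^ (5:ℝ) ≤ S ^ (5:ℝ) := ENNReal.rpow_le_rpow hX2S (by norm_num)
    have b2 : X1 ^ (ε/4) ≤ S ^ (ε/4) := ENNReal.rpow_le_rpow hX1S (by positivity)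
    have b3 : X2 ^ ((5:ℝ) - 5*ε/4) ≤ S ^ ((5:ℝ) - 5*ε/4) :=
      ENNReal.rpow_le_rpow hX2S (by linarith)
    calc X2 ^ (5:ℝ) * (X1 ^ (ε/4) * X2 ^ ((5:ℝ) - 5*ε/4))
        ≤ S ^ (5:ℝ) * (S ^ (ε/4) * S ^ ((5:ℝ) - 5*ε/4)) :=
          mul_le_mul' b1 (mul_le_mul' b2 b3)
      _ = S ^ ((10:ℝ) - ε) := by
          rw [← ENNReal.rpow_add_of_nonneg _ _ (by positivity) (by linarith),
            ← ENNReal.rpow_add_of_nonneg _ _ (by norm_num) (by linarith)]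
          congr 1
          ring
  refine (mul_le_mul_right hSbound _).trans ?_
  have hSof : S = ENNReal.ofReal (X1.toReal + X2.toReal) := by
    rw [ENNReal.ofReal_add ENNReal.toReal_nonneg ENNReal.toReal_nonneg,
      ENNReal.ofReal_toReal hX1, ENNReal.ofReal_toReal hX2]
  have hP0 : (0:ℝ) ≤ X1.toReal + X2.toReal :=
    add_nonneg ENNReal.toReal_nonneg ENNReal.toReal_nonneg
  rw [hSof, ENNReal.ofReal_rpow_of_nonneg hP0 (by linarith),
    ← ENNReal.ofReal_mul (div_nonneg hL0 hm.le)]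
  apply ENNReal.ofReal_le_ofReal
  have hP0' : (0:ℝ) ≤ (X1.toReal + X2.toReal) ^ ((10:ℝ) - ε) := Real.rpow_nonneg hP0 _
  have : L / m ≤ (L + 1) / m := by gcongr; linarith
  exact mul_le_mul_of_nonneg_right this hP0'
end
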